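/- If ω is a Borel probability measure on X satisfying the superstability estimate, then ω(X₀) = 1, i.e., Q(x) < ∞ for ω-almost every x ∈ X. -/

import Mathlib

open MeasureTheory Real Filter
open scoped ENNReal

noncomputable section

/-- A site of the `d`-dimensional integer lattice. -/
abbrev Site (d : ℕ) := Fin d → ℤ

/-- A configuration: at each site, a position `q` and a momentum `p`. -/
abbrev Conf (d : ℕ) := Site d → ℝ × ℝ

/-- ℓ¹ norm on the lattice. -/
def lnorm {d : ℕ} (ν : Site d) : ℤ := ∑ ℓ, |ν ℓ|

/-- ℓ¹ distance on the lattice. -/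
def ldist {d : ℕ} (i j : Site d) : ℤ := ∑ ℓ, |i ℓ - j ℓ|

/-- The cube `Λ_{ν,k}` of center `ν` and side `2k+1`. -/
def cube {d : ℕ} (ν : Site d) (k : ℕ) : Finset (Site d) :=
  Fintype.piFinset fun ℓ => Finset.Icc (ν ℓ - (k : ℤ)) (ν ℓ + (k : ℤ))

/-- The local energy `W_{ν,k}(x)`. -/
noncomputable def Wen {d : ℕ} (U : Polynomial ℝ) (K : ℝ) (ν : Site d) (k : ℕ)
    (x : Conf d) : ℝ :=
  (∑ i ∈ cube ν k, ((x i).2 ^ 2 / 2 + U.eval (x i).1 + 1)) +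
    K / 4 * ∑ i ∈ cube ν k, ∑ j ∈ cube ν k,
      (if ldist i j = 1 then ((x i).1 - (x j).1) ^ 2 else 0)

/-- The functional `Q(x) = sup_ν sup_{k > log^{1/d}(e+|ν|)} W_{ν,k}(x)/(2k+1)^d`,
with values in `[0,∞]`. -/
noncomputable def Qen {d : ℕ} (U : Polynomial ℝ) (K : ℝ) (x : Conf d) : ℝ≥0∞ :=
  ⨆ ν : Site d, ⨆ k : ℕ,
    ⨆ _ : Real.log (Real.exp 1 + (lnorm ν : ℝ)) ^ ((1 : ℝ) / (d : ℝ)) < (k : ℝ),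
      ENNReal.ofReal (Wen U K ν k x / (2 * (k : ℝ) + 1) ^ d)

/-- The good set of configurations `X₀ = {x : Q(x) < ∞}`. -/
def X0 (d : ℕ) (U : Polynomial ℝ) (K : ℝ) : Set (Conf d) := {x | Qen U K x < ⊤}

/-- Superstability estimate for a measure `ω` with constants `Cw`, `lam0`:
`∫ e^{λ W_{ν,k}} dω ≤ e^{Cw (2k+1)^d}` for all `ν`, `k` and `0 < λ ≤ lam0`. -/
def Superstable {d : ℕ} (U : Polynomial ℝ) (K : ℝ) (ω : Measure (Conf d))
    (Cw lam0 : ℝ) : Prop :=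
  ∀ (ν : Site d) (k : ℕ) (lam : ℝ), 0 < lam → lam ≤ lam0 →
    ∫⁻ x, ENNReal.ofReal (Real.exp (lam * Wen U K ν k x)) ∂ω
      ≤ ENNReal.ofReal (Real.exp (Cw * (2 * (k : ℝ) + 1) ^ d))

/-!
Chebyshev's inequality turns the superstability estimate at `λ = λ₀` into
`ω(W_{ν,k} ≥ M (2k+1)^d) ≤ exp (-(λ₀ M - C_ω) (2k+1)^d)`. The constraint
`k > log^{1/d}(e + |ν|)` forces `|ν| < e^{k^d}`, so for a given `k` at most
`(2⌈e^{k^d}⌉ + 1)^d ≤ e^{d (k^d + 2)}` centres contribute, and this is beaten by the factor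
`e^{-d (2k+1)^d}` once `λ₀ M = C_ω + d + s`. A union bound over all admissible `(ν, k)` gives
`ω(Q = ∞) ≤ ω(Q > M) ≤ 2 e^{2d - s}`, and `s → ∞`.
-/

theorem measure_ge_le_exp_of_lintegral_exp_le {α : Type*} [MeasurableSpace α] {μ : Measure α}
    {f : α → ℝ} (hf : AEMeasurable f μ) {lam b : ℝ} (hlam : 0 ≤ lam) (t : ℝ)
    (h : ∫⁻ x, ENNReal.ofReal (exp (lam * f x)) ∂μ ≤ ENNReal.ofReal (exp b)) :
    μ {x | t ≤ f x} ≤ ENNReal.ofReal (exp (b - lam * t)) := by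
  set a := ENNReal.ofReal (exp (lam * t))
  have hmono : {x | t ≤ f x} ⊆ {x | a ≤ ENNReal.ofReal (exp (lam * f x))} := fun x hx =>
    ENNReal.ofReal_le_ofReal (exp_le_exp.2 (mul_le_mul_of_nonneg_left hx hlam))
  calc μ {x | t ≤ f x} ≤ μ {x | a ≤ ENNReal.ofReal (exp (lam * f x))} := measure_mono hmono
    _ ≤ (∫⁻ x, ENNReal.ofReal (exp (lam * f x)) ∂μ) / a :=
      meas_ge_le_lintegral_div ((hf.const_mul lam).exp.ennreal_ofReal)
        (by simp [a, exp_pos]) ENNReal.ofReal_ne_top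
    _ ≤ ENNReal.ofReal (exp b) / a := by gcongr
    _ = ENNReal.ofReal (exp (b - lam * t)) := by
      rw [← ENNReal.ofReal_div_of_pos (exp_pos _), ← exp_sub]

theorem continuous_Wen {d : ℕ} (U : Polynomial ℝ) (K : ℝ) (ν : Site d) (k : ℕ) :
    Continuous (Wen U K ν k) := by
  have := U.continuous
  refine .add (by fun_prop) (.mul continuous_const
    (continuous_finsetSum _ fun i _ => continuous_finsetSum _ fun j _ => ?_))
  split_ifs <;> fun_prop

theorem Superstable.measure_le_Wen_le {d : ℕ} {U : Polynomial ℝ} {K : ℝ} {ω : Measure (Conf d)}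
    {Cw lam0 : ℝ} (hss : Superstable U K ω Cw lam0) (hlam0 : 0 < lam0) (ν : Site d) (k : ℕ)
    (t : ℝ) :
    ω {x | t ≤ Wen U K ν k x} ≤
      ENNReal.ofReal (exp (Cw * (2 * (k : ℝ) + 1) ^ d - lam0 * t)) :=
  measure_ge_le_exp_of_lintegral_exp_le (continuous_Wen U K ν k).measurable.aemeasurable
    hlam0.le t (hss ν k lam0 hlam0 le_rfl)

/-- The scales `k` over which the supremum in `Qen` at the centre `ν` is taken. -/
def Admissible {d : ℕ} (ν : Site d) (k : ℕ) : Prop :=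
  Real.log (Real.exp 1 + (lnorm ν : ℝ)) ^ ((1 : ℝ) / (d : ℝ)) < (k : ℝ)

instance {d : ℕ} (ν : Site d) (k : ℕ) : Decidable (Admissible ν k) := Real.decidableLT _ _

theorem lnorm_nonneg {d : ℕ} (ν : Site d) : 0 ≤ lnorm ν :=
  Finset.sum_nonneg fun _ _ => abs_nonneg _

theorem abs_le_lnorm {d : ℕ} (ν : Site d) (ℓ : Fin d) : |ν ℓ| ≤ lnorm ν :=
  Finset.single_le_sum (f := fun ℓ => |ν ℓ|) (fun _ _ => abs_nonneg _) (Finset.mem_univ ℓ)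

theorem Admissible.lnorm_lt_exp {d : ℕ} (hd : 0 < d) {ν : Site d} {k : ℕ} (h : Admissible ν k) :
    (lnorm ν : ℝ) < exp ((k : ℝ) ^ d) := by
  have hν : (0 : ℝ) ≤ lnorm ν := by exact_mod_cast lnorm_nonneg ν
  have hlog : 0 ≤ log (exp 1 + lnorm ν) :=
    log_nonneg (by linarith [add_one_le_exp (1 : ℝ)])
  rw [Admissible, one_div, rpow_inv_lt_iff_of_pos hlog (Nat.cast_nonneg k)
    (by exact_mod_cast hd), rpow_natCast, log_lt_iff_lt_exp (by positivity)] at h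
  linarith [exp_pos 1]

theorem Admissible.mem_cube {d : ℕ} (hd : 0 < d) {ν : Site d} {k : ℕ} (h : Admissible ν k) :
    ν ∈ cube 0 ⌈exp ((k : ℝ) ^ d)⌉₊ := by
  have hν : lnorm ν ≤ ⌈exp ((k : ℝ) ^ d)⌉₊ := by
    exact_mod_cast (h.lnorm_lt_exp hd).le.trans (Nat.le_ceil _)
  simp only [cube, Fintype.mem_piFinset, Finset.mem_Icc, Pi.zero_apply, zero_sub, zero_add,
    ← abs_le]
  exact fun ℓ => (abs_le_lnorm ν ℓ).trans hν

theorem card_cube {d : ℕ} (ν : Site d) (m : ℕ) : (cube ν m).card = (2 * m + 1) ^ d := by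
  have hside : ∀ ℓ, (ν ℓ + m + 1 - (ν ℓ - m)).toNat = 2 * m + 1 := fun ℓ => by omega
  simp [cube, Fintype.card_piFinset, Int.card_Icc, hside]

theorem tsum_ite_admissible_le {d : ℕ} (hd : 0 < d) (k : ℕ) (c : ℝ≥0∞) :
    ∑' ν : Site d, (if Admissible ν k then c else 0) ≤
      ((2 * ⌈exp ((k : ℝ) ^ d)⌉₊ + 1) ^ d : ℕ) * c := by
  rw [tsum_eq_sum (s := cube 0 ⌈exp ((k : ℝ) ^ d)⌉₊)
    fun ν hν => if_neg fun h => hν (h.mem_cube hd), ← card_cube (0 : Site d), ← nsmul_eq_mul,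
    ← Finset.sum_const]
  exact Finset.sum_le_sum fun ν _ => by split_ifs <;> simp

theorem two_mul_ceil_exp_add_one_le {x : ℝ} (hx : 0 ≤ x) :
    ((2 * ⌈exp x⌉₊ + 1 : ℕ) : ℝ) ≤ exp (x + 2) := by
  have hceil : (⌈exp x⌉₊ : ℝ) < exp x + 1 := Nat.ceil_lt_add_one (exp_pos x).le
  have hexp : 1 ≤ exp x := one_le_exp hx
  have hexp2 : 5 ≤ exp 2 := by linarith [quadratic_le_exp_of_nonneg (zero_le_two : (0 : ℝ) ≤ 2)]
  rw [exp_add]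
  push_cast
  nlinarith

theorem card_mul_exp_le {d : ℕ} (hd : 0 < d) (k : ℕ) {s : ℝ} (hs : 0 ≤ s) :
    ((2 * ⌈exp ((k : ℝ) ^ d)⌉₊ + 1 : ℕ) : ℝ) ^ d * exp (-(d + s) * (2 * k + 1) ^ d) ≤
      exp (2 * d - s * (k + 1)) := by
  have hcard : ((2 * ⌈exp ((k : ℝ) ^ d)⌉₊ + 1 : ℕ) : ℝ) ^ d ≤ exp (d * ((k : ℝ) ^ d + 2)) := by
    rw [exp_nat_mul]
    exact pow_le_pow_left₀ (by positivity) (two_mul_ceil_exp_add_one_le (by positivity)) d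
  have hk : (k : ℝ) ^ d ≤ (2 * k + 1) ^ d := pow_le_pow_left₀ (by positivity) (by linarith) d
  have hk' : (k : ℝ) + 1 ≤ (2 * k + 1) ^ d :=
    calc (k : ℝ) + 1 ≤ (2 * k + 1) ^ 1 := by linarith [(k.cast_nonneg : (0 : ℝ) ≤ k)]
      _ ≤ (2 * k + 1) ^ d := pow_le_pow_right₀ (by linarith [(k.cast_nonneg : (0 : ℝ) ≤ k)]) hd
  calc _ ≤ exp (d * ((k : ℝ) ^ d + 2)) * exp (-(d + s) * (2 * k + 1) ^ d) := by gcongr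
    _ = exp (2 * d - d * ((2 * k + 1) ^ d - (k : ℝ) ^ d) - s * (2 * k + 1) ^ d) := by
      rw [← exp_add]; ring_nf
    _ ≤ exp (2 * d - s * (k + 1)) := by
      gcongr
      nlinarith [mul_le_mul_of_nonneg_left hk (Nat.cast_nonneg d : (0 : ℝ) ≤ d)]

theorem tsum_ofReal_exp_sub_mul_succ_le (a : ℝ) {s : ℝ} (hs : 1 ≤ s) :
    ∑' k : ℕ, ENNReal.ofReal (exp (a - s * (k + 1))) ≤ ENNReal.ofReal (exp (a - s)) * 2 := by
  have hterm : ∀ k : ℕ, ENNReal.ofReal (exp (a - s * (k + 1))) =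
      ENNReal.ofReal (exp (a - s)) * ENNReal.ofReal (exp (-s)) ^ k := fun k => by
    rw [← ENNReal.ofReal_pow (exp_pos _).le, ← exp_nat_mul, ← ENNReal.ofReal_mul (exp_pos _).le,
      ← exp_add]
    ring_nf
  have hratio : ENNReal.ofReal (exp (-s)) ≤ 2⁻¹ := by
    rw [← ENNReal.ofReal_ofNat 2, ← ENNReal.ofReal_inv_of_pos two_pos, exp_neg]
    exact ENNReal.ofReal_le_ofReal (inv_anti₀ two_pos (by linarith [add_one_le_exp s]))
  simp_rw [hterm, ENNReal.tsum_mul_left, ENNReal.tsum_geometric]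
  gcongr
  calc (1 - ENNReal.ofReal (exp (-s)))⁻¹ ≤ (1 - 2⁻¹)⁻¹ := by gcongr
    _ = 2 := by rw [ENNReal.one_sub_inv_two, inv_inv]

theorem measure_ofReal_lt_Qen_le {d : ℕ} (U : Polynomial ℝ) (K : ℝ) (ω : Measure (Conf d))
    (M : ℝ) :
    ω {x | ENNReal.ofReal M < Qen U K x} ≤ ∑' ν : Site d, ∑' k : ℕ,
      if Admissible ν k then ω {x | M * (2 * (k : ℝ) + 1) ^ d ≤ Wen U K ν k x} else 0 := by
  have hcover : {x | ENNReal.ofReal M < Qen U K x} ⊆ ⋃ ν : Site d, ⋃ k : ℕ,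
      ⋃ _ : Admissible ν k, {x | M * (2 * (k : ℝ) + 1) ^ d ≤ Wen U K ν k x} := by
    intro x hx
    obtain ⟨ν, k, hadm, hlt⟩ := by simpa only [Qen, lt_iSup_iff] using hx
    have hM : M < Wen U K ν k x / (2 * (k : ℝ) + 1) ^ d :=
      (ENNReal.ofReal_lt_ofReal_iff'.1 hlt).1
    simp only [Set.mem_iUnion]
    exact ⟨ν, k, hadm, ((lt_div_iff₀ (by positivity)).1 hM).le⟩
  refine (measure_mono hcover).trans <| (measure_iUnion_le _).trans <|
    ENNReal.tsum_le_tsum fun ν => (measure_iUnion_le _).trans <| ENNReal.tsum_le_tsum fun k => ?_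
  rw [Set.iUnion_eq_if]
  split_ifs <;> simp

theorem measure_Qen_eq_top_le {d : ℕ} (hd : 0 < d) {U : Polynomial ℝ} {K : ℝ}
    {ω : Measure (Conf d)} {Cw lam0 : ℝ} (hlam0 : 0 < lam0) (hss : Superstable U K ω Cw lam0)
    {s : ℝ} (hs : 1 ≤ s) :
    ω {x | Qen U K x = ⊤} ≤ ENNReal.ofReal (exp (2 * d - s)) * 2 := by
  set M := (Cw + d + s) / lam0
  have hchernoff (ν : Site d) (k : ℕ) : ω {x | M * (2 * (k : ℝ) + 1) ^ d ≤ Wen U K ν k x} ≤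
      ENNReal.ofReal (exp (-(d + s) * (2 * k + 1) ^ d)) := by
    refine (hss.measure_le_Wen_le hlam0 ν k _).trans_eq ?_
    congr 2
    rw [← mul_assoc, show lam0 * M = Cw + d + s from mul_div_cancel₀ _ hlam0.ne']
    ring
  calc ω {x | Qen U K x = ⊤} ≤ ω {x | ENNReal.ofReal M < Qen U K x} :=
        measure_mono fun x hx => ENNReal.ofReal_lt_top.trans_eq hx.symm
    _ ≤ ∑' ν : Site d, ∑' k : ℕ,
          if Admissible ν k then ω {x | M * (2 * (k : ℝ) + 1) ^ d ≤ Wen U K ν k x} else 0 :=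
        measure_ofReal_lt_Qen_le U K ω M
    _ ≤ ∑' ν : Site d, ∑' k : ℕ,
          if Admissible ν k then ENNReal.ofReal (exp (-(d + s) * (2 * k + 1) ^ d)) else 0 := by
        gcongr with ν k
        split_ifs
        exacts [hchernoff ν k, le_rfl]
    _ = ∑' k : ℕ, ∑' ν : Site d,
          if Admissible ν k then ENNReal.ofReal (exp (-(d + s) * (2 * k + 1) ^ d)) else 0 :=
        ENNReal.tsum_comm
    _ ≤ ∑' k : ℕ, ENNReal.ofReal (exp (2 * d - s * (k + 1))) := by
        gcongr with k
        refine (tsum_ite_admissible_le hd k _).trans ?_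
        rw [← ENNReal.ofReal_natCast, ← ENNReal.ofReal_mul (by positivity), Nat.cast_pow]
        exact ENNReal.ofReal_le_ofReal (card_mul_exp_le hd k (by linarith))
    _ ≤ ENNReal.ofReal (exp (2 * d - s)) * 2 := tsum_ofReal_exp_sub_mul_succ_le _ hs

theorem statement5_general {d : ℕ} (hd : 0 < d) (U : Polynomial ℝ)
    (K : ℝ)
    (ω : Measure (Conf d)) [IsProbabilityMeasure ω]
    (Cw lam0 : ℝ) (hlam0 : 0 < lam0)
    (hss : Superstable U K ω Cw lam0) :
    ω (X0 d U K) = 1 := by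
  have hbound : Tendsto (fun s : ℝ => ENNReal.ofReal (exp (2 * d - s)) * 2) atTop (nhds 0) := by
    have := ENNReal.Tendsto.mul_const (b := 2) (ENNReal.tendsto_ofReal (tendsto_exp_atBot.comp
      (tendsto_atBot_add_const_left _ (2 * d : ℝ) tendsto_neg_atTop_atBot))) (by simp)
    simpa [Function.comp_def, sub_eq_add_neg] using this
  have hnull : ω {x | Qen U K x = ⊤} = 0 := nonpos_iff_eq_zero.1 <| ge_of_tendsto hbound <|
    eventually_atTop.2 ⟨1, fun s hs => measure_Qen_eq_top_le hd hlam0 hss hs⟩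
  have hfull : X0 d U K =ᵐ[ω] Set.univ :=
    ae_eq_univ.2 (by simpa [X0, Set.compl_ofPred, not_lt_top_iff] using hnull)
  rw [measure_congr hfull, measure_univ]

/-- A superstable probability measure gives full measure to `X₀`. -/
theorem statement5 {d : ℕ} (hd : 0 < d) (U : Polynomial ℝ) (hUdeg : U.degree = 4)
    (hUpos : ∀ y : ℝ, 0 ≤ U.eval y) (hUlead : 0 < U.leadingCoeff)
    (K : ℝ) (hK : 0 < K)
    (ω : Measure (Conf d)) [IsProbabilityMeasure ω]
    (Cw lam0 : ℝ) (hCw : 0 < Cw) (hlam0 : 0 < lam0)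
    (hss : Superstable U K ω Cw lam0) :
    ω (X0 d U K) = 1 :=
  statement5_general hd U K ω Cw lam0 hlam0 hss
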